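/- arXiv:2209.04606 — 3 statements merged into one kernel-verified Lean document; each statement's English description precedes it below -/
import Mathlib

section
/- (Invariance from decrease on annulus) Let V : ℝᵐ → ℝ be continuously differentiable with V(x(0)) ≤ 1, and suppose x : [0, T] → ℝᵐ is continuously differentiable and satisfies: whenever ε² ≤ V(x(t)) ≤ 1, d/dt V(x(t)) < 0 (with 0 < ε < 1). Then V(x(t)) ≤ 1 for all t ∈ [0, T]. -/
open Topology Filter


theorem invariance_from_annulus_decrease (m : ℕ)
    (V : (Fin m → ℝ) → ℝ) (hV : ContDiff ℝ 1 V)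
    (x : ℝ → Fin m → ℝ) (hx : ContDiff ℝ 1 x)
    (T ε : ℝ) (hT : 0 ≤ T) (hε0 : 0 < ε) (hε1 : ε < 1)
    (dV : ℝ → ℝ)
    (hderiv : ∀ t ∈ Set.Icc (0 : ℝ) T, HasDerivAt (fun s => V (x s)) (dV t) t)
    (hdec : ∀ t ∈ Set.Icc (0 : ℝ) T,
      ε ^ 2 ≤ V (x t) → V (x t) ≤ 1 → dV t < 0)
    (h0 : V (x 0) ≤ 1) :
    ∀ t ∈ Set.Icc (0 : ℝ) T, V (x t) ≤ 1 := by
  intro t ht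
  by_contra h
  push_neg at h
  set W : ℝ → ℝ := fun s => V (x s) with hW
  have ht0 : (0:ℝ) ≤ t := ht.1
  have hcont : ∀ s ∈ Set.Icc (0:ℝ) t, ContinuousAt W s := by
    intro s hs
    exact (hderiv s ⟨hs.1, hs.2.trans ht.2⟩).continuousAt
  set S := {s ∈ Set.Icc (0:ℝ) t | W s ≤ 1} with hS
  have h0S : (0:ℝ) ∈ S := ⟨⟨le_refl _, ht0⟩, h0⟩
  have hSne : S.Nonempty := ⟨0, h0S⟩
  have hSbdd : BddAbove S := ⟨t, fun s hs => hs.1.2⟩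
  set τ := sSup S with hτ
  have hτmem : τ ∈ Set.Icc (0:ℝ) t :=
    ⟨le_csSup hSbdd h0S, csSup_le hSne (fun s hs => hs.1.2)⟩
  have hτT : τ ∈ Set.Icc (0:ℝ) T := ⟨hτmem.1, hτmem.2.trans ht.2⟩
  have hWτle : W τ ≤ 1 := by
    have hclosed : IsClosed S := by
      have hSeq : S = Set.Icc 0 t ∩ W ⁻¹' Set.Iic 1 := by
        ext s; simp [hS, Set.mem_sep_iff, and_assoc]
      rw [hSeq]
      have hcont' : ContinuousOn W (Set.Icc 0 t) :=
        fun s hs => (hcont s hs).continuousWithinAt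
      exact hcont'.preimage_isClosed_of_isClosed isClosed_Icc isClosed_Iic
    exact (hclosed.csSup_mem hSne hSbdd).2
  have hτt : τ < t := by
    rcases lt_or_eq_of_le hτmem.2 with h' | h'
    · exact h'
    · rw [h'] at hWτle; exact absurd hWτle (not_le.mpr h)
  have hgt : ∀ s, τ < s → s ≤ t → 1 < W s := by
    intro s hs1 hs2
    by_contra hle
    push_neg at hle
    exact absurd (le_csSup hSbdd ⟨⟨hτmem.1.trans hs1.le, hs2⟩, hle⟩) (not_le.mpr hs1)
  have hne : (𝓝[Set.Ioc τ t] τ).NeBot := by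
    apply mem_closure_iff_nhdsWithin_neBot.mp
    rw [closure_Ioc hτt.ne]
    exact ⟨le_refl _, hτt.le⟩
  have hWτge : 1 ≤ W τ := by
    have htend : Filter.Tendsto W (𝓝[Set.Ioc τ t] τ) (𝓝 (W τ)) :=
      (hcont τ hτmem).tendsto.mono_left nhdsWithin_le_nhds
    refine ge_of_tendsto htend ?_
    filter_upwards [self_mem_nhdsWithin] with s hs
    exact (hgt s hs.1 hs.2).le
  have hWτ : W τ = 1 := le_antisymm hWτle hWτge
  have hd : dV τ < 0 := hdec τ hτT (by show ε ^ 2 ≤ W τ; rw [hWτ]; nlinarith) (hWτ.le)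
  have hslope : Filter.Tendsto (slope W τ) (𝓝[≠] τ) (𝓝 (dV τ)) :=
    hasDerivAt_iff_tendsto_slope.mp (hderiv τ hτT)
  have hslope' : Filter.Tendsto (slope W τ) (𝓝[Set.Ioc τ t] τ) (𝓝 (dV τ)) := by
    refine hslope.mono_left (nhdsWithin_mono τ ?_)
    intro s hs
    exact ne_of_gt hs.1
  have hev : ∀ᶠ s in 𝓝[Set.Ioc τ t] τ, slope W τ s < 0 :=
    hslope'.eventually_lt_const hd
  obtain ⟨s, hsslope, hsmem⟩ := (hev.and self_mem_nhdsWithin).exists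
  have hst : τ < s := hsmem.1
  have hWs : 1 < W s := hgt s hst hsmem.2
  have : W s - W τ < 0 := by
    rw [slope_def_field] at hsslope
    have hpos : 0 < s - τ := sub_pos.mpr hst
    have := div_neg_iff.mp hsslope
    rcases this with ⟨_, h2⟩ | ⟨h1, _⟩
    · linarith
    · linarith
  rw [hWτ] at this
  linarith
end

section
/- Let X ≻ 0 on ℝⁿ, A_z ∈ ℝ^{n×n}, b_z ∈ ℝⁿ, and positive reals r_e, w̄, μ_e ≥ 0 such that the block matrix [[A_zᵀ X + X A_z + μ_e X, −X b_z],[−b_zᵀ X, −μ_e r_e²/w̄²]] is negative definite. Then for every e ∈ ℝⁿ and w ∈ ℝ with eᵀ X e ≥ r_e² and w² ≤ w̄², one has 2 eᵀ X (A_z e − b_z w) < 0. -/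
/-!
Evaluate the negative definite block form at `(e, w)`. It equals
`2 eᵀ X (A_z e − b_z w) + μ_e (eᵀ X e − (r_e² / w̄²) w²)`, and the S-procedure term is
nonnegative because `eᵀ X e ≥ r_e² ≥ (r_e² / w̄²) w²`. The vector `(e, w)` is nonzero since
`eᵀ X e ≥ r_e² > 0`.
-/

open Matrix

namespace Matrix

variable {m ι R : Type*} [Fintype m] [Unique ι] [CommSemiring R]

theorem sumElim_dotProduct_fromBlocks_mulVec_sumElim (A : Matrix m m R) (u v : m → R)
    (d t : R) (x : m → R) :
    Sum.elim x (fun _ : ι => t) ⬝ᵥ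
        fromBlocks A (replicateCol ι u) (replicateRow ι v) (of fun _ _ => d) *ᵥ
          Sum.elim x (fun _ : ι => t) =
      x ⬝ᵥ A *ᵥ x + t * (x ⬝ᵥ u) + t * (v ⬝ᵥ x) + d * t ^ 2 := by
  simp only [fromBlocks_mulVec, sumElim_dotProduct_sumElim, Sum.elim_comp_inl,
    Sum.elim_comp_inr, dotProduct_add]
  simp [dotProduct, mulVec, Finset.mul_sum, mul_comm, mul_left_comm, sq, add_assoc]

theorem IsSymm.dotProduct_transpose_mul_add_mul_mulVec {X : Matrix m m R} (hX : X.IsSymm)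
    (A : Matrix m m R) (x : m → R) :
    x ⬝ᵥ (Aᵀ * X + X * A) *ᵥ x = 2 * (x ⬝ᵥ X *ᵥ A *ᵥ x) := by
  rw [add_mulVec, dotProduct_add, ← mulVec_mulVec, ← mulVec_mulVec, dotProduct_transpose_mulVec,
    ← hX.eq, dotProduct_transpose_mulVec, hX.eq, dotProduct_comm, two_mul]

end Matrix

theorem estimator_lmi_decrease_general (n : ℕ)
    (X Az : Matrix (Fin n) (Fin n) ℝ)
    (hXsymm : X.IsSymm)
    (bz : Fin n → ℝ) (re wbar μe : ℝ)
    (hre : 0 < re) (hμe : 0 ≤ μe)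
    (hND : (-(Matrix.fromBlocks
        (Azᵀ * X + X * Az + μe • X)
        (fun i (_ : Fin 1) => -(X *ᵥ bz) i)
        (fun (_ : Fin 1) j => -(X *ᵥ bz) j)
        (fun (_ : Fin 1) (_ : Fin 1) => -(μe * re ^ 2 / wbar ^ 2)))).PosDef) :
    ∀ (e : Fin n → ℝ) (w : ℝ),
      re ^ 2 ≤ e ⬝ᵥ X *ᵥ e → w ^ 2 ≤ wbar ^ 2 →
        2 * (e ⬝ᵥ X *ᵥ (Az *ᵥ e - w • bz)) < 0 := by
  intro e w hE hw
  have he : e ≠ 0 := by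
    rintro rfl
    simp only [mulVec_zero, dotProduct_zero] at hE
    linarith [pow_pos hre 2]
  have hform := hND.dotProduct_mulVec_pos (x := Sum.elim e fun _ => w)
    (fun h => he (funext fun i => congrFun h (.inl i)))
  rw [star_trivial, neg_mulVec, dotProduct_neg] at hform
  -- the blocks of `hND` are bare lambdas, equal to `replicateCol`/`replicateRow`/`of` only up to
  -- unfolding, hence `erw`
  erw [sumElim_dotProduct_fromBlocks_mulVec_sumElim (u := -(X *ᵥ bz)) (v := -(X *ᵥ bz))
    (d := -(μe * re ^ 2 / wbar ^ 2))] at hform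
  rw [add_mulVec, dotProduct_add, hXsymm.dotProduct_transpose_mul_add_mul_mulVec, smul_mulVec,
    dotProduct_smul, dotProduct_neg, neg_dotProduct, dotProduct_comm (X *ᵥ bz)] at hform
  have hsproc : μe * re ^ 2 / wbar ^ 2 * w ^ 2 ≤ μe * (e ⬝ᵥ X *ᵥ e) :=
    calc μe * re ^ 2 / wbar ^ 2 * w ^ 2 = μe * re ^ 2 * (w ^ 2 / wbar ^ 2) := by ring
      _ ≤ μe * re ^ 2 * 1 := by gcongr; exact div_le_one_of_le₀ hw (sq_nonneg _)
      _ ≤ μe * (e ⬝ᵥ X *ᵥ e) := by rw [mul_one]; gcongr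
  rw [smul_eq_mul] at hform
  rw [mulVec_sub, dotProduct_sub, mulVec_smul, dotProduct_smul, smul_eq_mul]
  linarith

theorem estimator_lmi_decrease (n : ℕ)
    (X Az : Matrix (Fin n) (Fin n) ℝ)
    (hXsymm : X.IsSymm) (hXpd : X.PosDef)
    (bz : Fin n → ℝ) (re wbar μe : ℝ)
    (hre : 0 < re) (hwbar : 0 < wbar) (hμe : 0 ≤ μe)
    (hND : (-(Matrix.fromBlocks
        (Azᵀ * X + X * Az + μe • X)
        (fun i (_ : Fin 1) => -(X *ᵥ bz) i)
        (fun (_ : Fin 1) j => -(X *ᵥ bz) j)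
        (fun (_ : Fin 1) (_ : Fin 1) => -(μe * re ^ 2 / wbar ^ 2)))).PosDef) :
    ∀ (e : Fin n → ℝ) (w : ℝ),
      re ^ 2 ≤ e ⬝ᵥ X *ᵥ e → w ^ 2 ≤ wbar ^ 2 →
        2 * (e ⬝ᵥ X *ᵥ (Az *ᵥ e - w • bz)) < 0 :=
  estimator_lmi_decrease_general n X Az hXsymm bz re wbar μe hre hμe hND
end

section
/- Let P ≻ 0 be symmetric on ℝᵐ, A ∈ ℝ^{m×m}, B ∈ ℝ^{m×k}, and μ ≥ 0, ε > 0, w̄ ≥ 0. Suppose the block matrix [[Aᵀ P + P A + (μ w̄²/ε²) P, P B],[Bᵀ P, −μ I]] is negative definite. Then for every x ∈ ℝᵐ and d ∈ ℝᵏ with xᵀ P x ≥ ε² and dᵀ d ≤ w̄², one has 2 xᵀ P (A x + B d) < 0. -/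
open Matrix

namespace Matrix

theorem sumElim_dotProduct_fromBlocks_mulVec_sumElim_s18 {l m n o α : Type*} [Fintype l] [Fintype m]
    [Fintype n] [Fintype o] [NonUnitalNonAssocSemiring α] (A : Matrix n l α) (B : Matrix n m α)
    (C : Matrix o l α) (D : Matrix o m α) (u : n → α) (v : o → α) (x : l → α) (y : m → α) :
    Sum.elim u v ⬝ᵥ fromBlocks A B C D *ᵥ Sum.elim x y =
      u ⬝ᵥ (A *ᵥ x + B *ᵥ y) + v ⬝ᵥ (C *ᵥ x + D *ᵥ y) := by
  rw [fromBlocks_mulVec, Sum.elim_comp_inl, Sum.elim_comp_inr, sumElim_dotProduct_sumElim]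

theorem IsSymm.mulVec_dotProduct {n R : Type*} [Fintype n] [CommSemiring R] {P : Matrix n n R}
    (hP : P.IsSymm) (x y : n → R) : P *ᵥ x ⬝ᵥ y = x ⬝ᵥ P *ᵥ y := by
  rw [dotProduct_comm, ← dotProduct_transpose_mulVec, hP.eq]

/-- At `(x, d)` the LMI block form is the derivative of `xᵀ P x` along `ẋ = A x + B d` plus the two
S-procedure multiplier terms. -/
theorem IsSymm.quadForm_lyapunov_fromBlocks {m k R : Type*} [Fintype m] [Fintype k]
    [DecidableEq k] [CommRing R] {P : Matrix m m R} (hP : P.IsSymm) (A : Matrix m m R)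
    (B : Matrix m k R) (c μ : R) (x : m → R) (d : k → R) :
    Sum.elim x d ⬝ᵥ Matrix.fromBlocks (Aᵀ * P + P * A + c • P) (P * B) (Bᵀ * P) (-(μ • 1)) *ᵥ
        Sum.elim x d =
      2 * (x ⬝ᵥ P *ᵥ (A *ᵥ x + B *ᵥ d)) + c * (x ⬝ᵥ P *ᵥ x) - μ * (d ⬝ᵥ d) := by
  rw [sumElim_dotProduct_fromBlocks_mulVec_sumElim_s18]
  simp only [add_mulVec, smul_mulVec, neg_mulVec, one_mulVec, dotProduct_add, dotProduct_neg,
    dotProduct_smul, smul_eq_mul, ← mulVec_mulVec, mulVec_add, dotProduct_transpose_mulVec,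
    hP.mulVec_dotProduct]
  ring

end Matrix

theorem lyapunov_lmi_decrease_general (m k : ℕ)
    (P A : Matrix (Fin m) (Fin m) ℝ)
    (hPsymm : P.IsSymm)
    (B : Matrix (Fin m) (Fin k) ℝ)
    (μ ε wbar : ℝ) (hμ : 0 ≤ μ) (hε : 0 < ε)
    (hND : (-(Matrix.fromBlocks
        (Aᵀ * P + P * A + (μ * wbar ^ 2 / ε ^ 2) • P)
        (P * B) (Bᵀ * P)
        (-(μ • (1 : Matrix (Fin k) (Fin k) ℝ))))).PosDef) :
    ∀ (x : Fin m → ℝ) (d : Fin k → ℝ),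
      ε ^ 2 ≤ x ⬝ᵥ P *ᵥ x → d ⬝ᵥ d ≤ wbar ^ 2 →
        2 * (x ⬝ᵥ P *ᵥ (A *ᵥ x + B *ᵥ d)) < 0 := by
  intro x d hx hd
  have hx0 : x ≠ 0 := by
    rintro rfl
    simp only [mulVec_zero, dotProduct_zero] at hx
    exact (pow_pos hε 2).not_ge hx
  have hz0 : Sum.elim x d ≠ 0 := fun h => hx0 (funext fun i => congrFun h (Sum.inl i))
  have hneg := hND.dotProduct_mulVec_pos hz0
  rw [star_trivial, neg_mulVec, dotProduct_neg, neg_pos,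
    hPsymm.quadForm_lyapunov_fromBlocks] at hneg
  -- S-procedure: each multiplier term dominates `μ * wbar ^ 2` from the appropriate side.
  have hstate : μ * wbar ^ 2 ≤ μ * wbar ^ 2 / ε ^ 2 * (x ⬝ᵥ P *ᵥ x) := by
    calc μ * wbar ^ 2 = μ * wbar ^ 2 / ε ^ 2 * ε ^ 2 := by field_simp
      _ ≤ _ := by gcongr
  have hdist : μ * (d ⬝ᵥ d) ≤ μ * wbar ^ 2 := mul_le_mul_of_nonneg_left hd hμ
  linarith

theorem lyapunov_lmi_decrease (m k : ℕ)
    (P A : Matrix (Fin m) (Fin m) ℝ)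
    (hPsymm : P.IsSymm) (hPpd : P.PosDef)
    (B : Matrix (Fin m) (Fin k) ℝ)
    (μ ε wbar : ℝ) (hμ : 0 ≤ μ) (hε : 0 < ε) (hwbar : 0 ≤ wbar)
    (hND : (-(Matrix.fromBlocks
        (Aᵀ * P + P * A + (μ * wbar ^ 2 / ε ^ 2) • P)
        (P * B) (Bᵀ * P)
        (-(μ • (1 : Matrix (Fin k) (Fin k) ℝ))))).PosDef) :
    ∀ (x : Fin m → ℝ) (d : Fin k → ℝ),
      ε ^ 2 ≤ x ⬝ᵥ P *ᵥ x → d ⬝ᵥ d ≤ wbar ^ 2 →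
        2 * (x ⬝ᵥ P *ᵥ (A *ᵥ x + B *ᵥ d)) < 0 :=
  lyapunov_lmi_decrease_general m k P A hPsymm B μ ε wbar hμ hε hND
end
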